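/- The set function A ↦ HVI(A | P, r) = HV(A ∪ P | r) − HV(P | r), defined on finite subsets A of R^M, is a normalized, monotone, submodular set function: HVI(∅ | P) = 0; A ⊆ B implies HVI(A | P) ≤ HVI(B | P); and for all A ⊆ B and y ∈ R^M, HVI(A ∪ {y} | P) − HVI(A | P) ≥ HVI(B ∪ {y} | P) − HVI(B | P). -/

import Mathlib

open MeasureTheory
open scoped Classical symmDiff

/-- Hypervolume dominated by a finite set `S` of points, bounded below by reference point `r`:
the Lebesgue measure of the union of the boxes `[r, v]` for `v ∈ S`. -/
noncomputable def HV {M : ℕ} (S : Finset (Fin M → ℝ)) (r : Fin M → ℝ) : ℝ :=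
  (volume (⋃ v ∈ S, Set.Icc r v)).toReal

/-- Hypervolume improvement of a finite set `A` with respect to a finite set `P`
and reference point `r`. -/
noncomputable def HVI {M : ℕ} (A P : Finset (Fin M → ℝ)) (r : Fin M → ℝ) : ℝ :=
  HV (A ∪ P) r - HV P r

/-! The marginal gain of adding `y` to `A` is the measure of the part of the box `[r, y]` not yet
dominated by `A ∪ P`. This region shrinks as `A` grows, which gives submodularity; monotonicity
is monotonicity of the measure of the dominated region. -/

section DominatedRegion

variable {α : Type*} [Preorder α]

def dominatedRegion (S : Finset α) (r : α) : Set α :=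
  ⋃ v ∈ S, Set.Icc r v

theorem dominatedRegion_mono {S T : Finset α} (h : S ⊆ T) (r : α) :
    dominatedRegion S r ⊆ dominatedRegion T r :=
  Set.biUnion_subset_biUnion_left (Finset.coe_subset.mpr h)

theorem dominatedRegion_insert [DecidableEq α] (y : α) (S : Finset α) (r : α) :
    dominatedRegion (insert y S) r = Set.Icc r y ∪ dominatedRegion S r :=
  Finset.set_biUnion_insert y S _

theorem isCompact_dominatedRegion [TopologicalSpace α] [CompactIccSpace α]
    (S : Finset α) (r : α) : IsCompact (dominatedRegion S r) :=
  S.isCompact_biUnion fun _ _ => isCompact_Icc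

theorem measurableSet_dominatedRegion [TopologicalSpace α] [OrderClosedTopology α]
    [MeasurableSpace α] [OpensMeasurableSpace α] (S : Finset α) (r : α) :
    MeasurableSet (dominatedRegion S r) :=
  S.measurableSet_biUnion fun _ _ => measurableSet_Icc

end DominatedRegion

section Hypervolume

variable {M : ℕ}

theorem HV_eq_measureReal (S : Finset (Fin M → ℝ)) (r : Fin M → ℝ) :
    HV S r = volume.real (dominatedRegion S r) :=
  rfl

theorem volume_dominatedRegion_ne_top (S : Finset (Fin M → ℝ)) (r : Fin M → ℝ) :
    volume (dominatedRegion S r) ≠ ⊤ :=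
  (isCompact_dominatedRegion S r).measure_ne_top

theorem HV_mono {S T : Finset (Fin M → ℝ)} (h : S ⊆ T) (r : Fin M → ℝ) : HV S r ≤ HV T r :=
  measureReal_mono (dominatedRegion_mono h r) (volume_dominatedRegion_ne_top T r)

theorem HV_insert_sub (y : Fin M → ℝ) (S : Finset (Fin M → ℝ)) (r : Fin M → ℝ) :
    HV (insert y S) r - HV S r = volume.real (Set.Icc r y \ dominatedRegion S r) := by
  rw [HV_eq_measureReal, HV_eq_measureReal, dominatedRegion_insert,
    measureReal_sdiff' (measurableSet_dominatedRegion S r) isCompact_Icc.measure_ne_top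
      (volume_dominatedRegion_ne_top S r)]

theorem HVI_insert_sub (y : Fin M → ℝ) (A P : Finset (Fin M → ℝ)) (r : Fin M → ℝ) :
    HVI (insert y A) P r - HVI A P r =
      volume.real (Set.Icc r y \ dominatedRegion (A ∪ P) r) := by
  rw [← HV_insert_sub, HVI, HVI, Finset.insert_union]
  ring

end Hypervolume

/-- The hypervolume improvement is a normalized, monotone, submodular set function. -/
theorem hvi_normalized_monotone_submodular {M : ℕ} (P : Finset (Fin M → ℝ))
    (r : Fin M → ℝ) :
    HVI ∅ P r = 0 ∧
    (∀ A B : Finset (Fin M → ℝ), A ⊆ B → HVI A P r ≤ HVI B P r) ∧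
    (∀ A B : Finset (Fin M → ℝ), A ⊆ B → ∀ y : Fin M → ℝ,
      HVI (insert y B) P r - HVI B P r ≤ HVI (insert y A) P r - HVI A P r) := by
  refine ⟨by simp [HVI], fun A B hAB => ?_, fun A B hAB y => ?_⟩
  · exact sub_le_sub_right (HV_mono (Finset.union_subset_union_left hAB) r) _
  · rw [HVI_insert_sub, HVI_insert_sub]
    exact measureReal_mono
      (Set.sdiff_subset_sdiff_right (dominatedRegion_mono (Finset.union_subset_union_left hAB) r))
      (measure_ne_top_of_subset Set.sdiff_subset isCompact_Icc.measure_ne_top)
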